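/- Extending a segment of an unrooted tree by one position increases similarity by at most 2: for a rooted tree T and unrooted tree Q, sim(T, Q[i, j+1)) ≤ sim(T, Q[i,j)) + 2 whenever i ≤ j and j−i+1 ≤ 2|E(Q)|, and likewise sim(T, Q[i−1, j)) ≤ sim(T, Q[i,j)) + 2. -/

import Mathlib

/-- A rooted, ordered, edge-labeled tree: a root with an ordered list of
(edge label, child subtree) pairs. -/
inductive RTree (α : Type) : Type
  | node : List (α × RTree α) → RTree α

namespace RTree
variable {α : Type}

mutual
  /-- Number of edges of a rooted tree. -/
  def numEdges : RTree α → ℕ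
    | .node cs => numEdgesL cs
  def numEdgesL : List (α × RTree α) → ℕ
    | [] => 0
    | (_, t) :: rest => 1 + numEdges t + numEdgesL rest
end

mutual
  /-- The list of (paths identifying the) edges of a rooted tree: an edge is
  identified by the list of child indices leading to it from the root. -/
  def edgePaths : RTree α → List (List ℕ)
    | .node cs => edgePathsL 0 cs
  def edgePathsL : ℕ → List (α × RTree α) → List (List ℕ)
    | _, [] => []
    | i, (_, t) :: rest =>
        ([i] :: (edgePaths t).map (List.cons i)) ++ edgePathsL (i+1) rest
end

/-- The label of the edge identified by a path, if any. -/
def labelAt : RTree α → List ℕ → Option α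
  | _, [] => none
  | .node cs, i :: p =>
      match cs[i]? with
      | none => none
      | some (a, t) => match p with
        | [] => some a
        | _ :: _ => labelAt t p

mutual
  /-- The Euler tour of a rooted tree, as the list of edges (given by their
  paths) traversed; each edge appears exactly twice. -/
  def eulerTour : RTree α → List (List ℕ)
    | .node cs => eulerTourL 0 cs
  def eulerTourL : ℕ → List (α × RTree α) → List (List ℕ)
    | _, [] => []
    | i, (_, t) :: rest =>
        ([i] :: ((eulerTour t).map (List.cons i) ++ [[i]])) ++ eulerTourL (i+1) rest
end

/-- The doubled Euler tour: the Euler tour traversed twice. -/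
def dblTour (Q : RTree α) : List (List ℕ) := eulerTour Q ++ eulerTour Q

/- Contraction of all edges whose (absolute) path fails the predicate `keep`. -/
mutual
  def contractT (keep : List ℕ → Bool) (pref : List ℕ) : RTree α → RTree α
    | .node cs => .node (contractL keep pref 0 cs)
  def contractL (keep : List ℕ → Bool) (pref : List ℕ) :
      ℕ → List (α × RTree α) → List (α × RTree α)
    | _, [] => []
    | i, (a, t) :: rest =>
        (if keep (pref ++ [i]) then
          [(a, contractT keep (pref ++ [i]) t)]
         else
          (match contractT keep (pref ++ [i]) t with | .node cs' => cs')) ++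
        contractL keep pref (i+1) rest
end

/-- Positions `i..j-1` (0-based) of the doubled Euler tour of `Q`. -/
def window (Q : RTree α) (i j : ℕ) : List (List ℕ) := ((dblTour Q).drop i).take (j - i)

/-- The segment `Q[i,j)`: the tree obtained from `Q` by contracting every edge that
occurs fewer than 2 times in positions `i..j-1` of the doubled Euler tour. -/
def segment (Q : RTree α) (i j : ℕ) : RTree α :=
  contractT (fun p => 2 ≤ (window Q i j).count p) [] Q

/-- A structure-respecting matching between the edges of `t₁` and `t₂`:
an injective partial map preserving the ancestor-descendant relation
(path prefix) and the left-to-right order of edges (lexicographic order). -/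
def IsMatching (t₁ t₂ : RTree α) (M : Finset (List ℕ × List ℕ)) : Prop :=
  (∀ pq ∈ M, pq.1 ∈ t₁.edgePaths ∧ pq.2 ∈ t₂.edgePaths) ∧
  (∀ pq ∈ M, ∀ pq' ∈ M,
    (pq.1 = pq'.1 ↔ pq.2 = pq'.2) ∧
    (pq.1 <+: pq'.1 ↔ pq.2 <+: pq'.2) ∧
    (List.Lex (· < ·) pq.1 pq'.1 ↔ List.Lex (· < ·) pq.2 pq'.2))

/-- Weight of a matching: `2` for each pair with equal labels, `1` otherwise. -/
def weight [DecidableEq α] (t₁ t₂ : RTree α) (M : Finset (List ℕ × List ℕ)) : ℕ :=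
  ∑ pq ∈ M, (if labelAt t₁ pq.1 = labelAt t₂ pq.2 then 2 else 1)

/-- Similarity: the maximum total weight of a structure-respecting matching. -/
noncomputable def simi [DecidableEq α] (t₁ t₂ : RTree α) : ℕ :=
  sSup {w | ∃ M, IsMatching t₁ t₂ M ∧ w = weight t₁ t₂ M}

end RTree

/-!
Contracting one more edge `x` can only destroy the matched pair that uses `x`. Indeed, the kept
edges of `Q` correspond to the edges of a contraction by a bijection preserving labels, ancestry
and left-to-right order, so a matching of `T` with the less contracted tree, minus its pair at
`x`, is carried to a matching of `T` with the more contracted tree of the same weight, and a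
single pair weighs at most 2. Extending the window by one position changes the occurrence count
of one tour entry only, so the two segments are contractions differing in at most one edge.
-/

namespace RTree
variable {α : Type}

def shiftHead (k : ℕ) : List ℕ → List ℕ
  | [] => []
  | h :: t => (k + h) :: t

def children : RTree α → List (α × RTree α)
  | .node cs => cs

@[simp] theorem children_node (cs : List (α × RTree α)) : children (node cs) = cs := rfl

theorem exists_cons_of_mem_edgePathsL {p : List ℕ} :
    ∀ {i : ℕ} {cs : List (α × RTree α)}, p ∈ edgePathsL i cs →
      ∃ h r, p = h :: r ∧ i ≤ h ∧ h < i + cs.length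
  | _, [], hp => by simp [edgePathsL] at hp
  | i, (_, t) :: rest, hp => by
    simp only [edgePathsL, List.cons_append, List.mem_cons, List.mem_append, List.mem_map] at hp
    rcases hp with rfl | ⟨r, -, rfl⟩ | hp
    · exact ⟨i, [], rfl, le_rfl, by simp⟩
    · exact ⟨i, r, rfl, le_rfl, by simp⟩
    · obtain ⟨h, r, rfl, h₁, h₂⟩ := exists_cons_of_mem_edgePathsL hp
      exact ⟨h, r, rfl, by omega, by simp; omega⟩

theorem exists_cons_of_mem_edgePaths {p : List ℕ} {t : RTree α} (hp : p ∈ edgePaths t) :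
    ∃ h r, p = h :: r ∧ h < (children t).length := by
  cases t
  obtain ⟨h, r, rfl, -, h₂⟩ := exists_cons_of_mem_edgePathsL hp
  exact ⟨h, r, rfl, by simpa using h₂⟩

theorem edgePathsL_add (k : ℕ) : ∀ (i : ℕ) (cs : List (α × RTree α)),
    edgePathsL (k + i) cs = (edgePathsL i cs).map (shiftHead k)
  | _, [] => by simp [edgePathsL]
  | i, (_, t) :: rest => by
    have hfun : shiftHead k ∘ List.cons i = List.cons (k + i) := rfl
    simp only [edgePathsL, ← edgePathsL_add k (i + 1) rest, List.map_append, List.map_cons,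
      List.map_map, hfun, Nat.add_assoc]
    rfl

theorem edgePathsL_append (cs ds : List (α × RTree α)) : ∀ i : ℕ,
    edgePathsL i (cs ++ ds) = edgePathsL i cs ++ edgePathsL (i + cs.length) ds := by
  induction cs with
  | nil => simp [edgePathsL]
  | cons c rest ih =>
    intro i
    simp [edgePathsL, ih, Nat.add_comm 1, Nat.add_assoc]

/-- `IsMatching` asks exactly that any two of its pairs be `Compatible`. -/
def Compatible (e e' : List ℕ × List ℕ) : Prop :=
  (e.1 = e'.1 ↔ e.2 = e'.2) ∧ (e.1 <+: e'.1 ↔ e.2 <+: e'.2) ∧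
    (List.Lex (· < ·) e.1 e'.1 ↔ List.Lex (· < ·) e.2 e'.2)

def PairwiseCompatible (c : List (List ℕ × List ℕ)) : Prop :=
  ∀ e ∈ c, ∀ e' ∈ c, Compatible e e'

namespace Compatible

theorem swap {e e' : List ℕ × List ℕ} (h : Compatible e e') : Compatible e.swap e'.swap :=
  ⟨h.1.symm, h.2.1.symm, h.2.2.symm⟩

theorem trans {a a' b b' c c' : List ℕ} (h₁ : Compatible (a, b) (a', b'))
    (h₂ : Compatible (b, c) (b', c')) : Compatible (a, c) (a', c') :=
  ⟨h₁.1.trans h₂.1, h₁.2.1.trans h₂.2.1, h₁.2.2.trans h₂.2.2⟩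

theorem cons_cons {r q r' q' : List ℕ} (i k : ℕ) (h : Compatible (r, q) (r', q')) :
    Compatible (i :: r, k :: q) (i :: r', k :: q') := by
  simpa [Compatible, List.cons_lex_cons_iff] using h

theorem cons_shiftHead {r q r' q' : List ℕ} (i k : ℕ) (hq : q ≠ []) (hq' : q' ≠ [])
    (h : Compatible (r, q) (r', q')) :
    Compatible (i :: r, shiftHead k q) (i :: r', shiftHead k q') := by
  obtain ⟨h, t, rfl⟩ := List.exists_cons_of_ne_nil hq
  obtain ⟨h', t', rfl⟩ := List.exists_cons_of_ne_nil hq'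
  simpa [Compatible, shiftHead, List.cons_lex_cons_iff] using h

theorem of_head_lt {h h' g g' : ℕ} {r q s s' : List ℕ} (hg : h < g) (hg' : h' < g') :
    Compatible (h :: r, h' :: q) (g :: s, g' :: s') := by
  simp only [Compatible, List.cons.injEq, List.cons_prefix_cons, List.cons_lex_cons_iff]
  refine ⟨?_, ?_, ?_⟩ <;> constructor <;> omega

theorem of_head_gt {h h' g g' : ℕ} {r q s s' : List ℕ} (hg : g < h) (hg' : g' < h') :
    Compatible (h :: r, h' :: q) (g :: s, g' :: s') := by
  simp only [Compatible, List.cons.injEq, List.cons_prefix_cons, List.cons_lex_cons_iff]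
  refine ⟨?_, ?_, ?_⟩ <;> constructor <;> omega

theorem nil_nil_left {r q : List ℕ} (hr : r ≠ []) (hq : q ≠ []) :
    Compatible ([], []) (r, q) := by
  obtain ⟨h, t, rfl⟩ := List.exists_cons_of_ne_nil hr
  obtain ⟨h', t', rfl⟩ := List.exists_cons_of_ne_nil hq
  simp [Compatible]

theorem nil_nil_right {r q : List ℕ} (hr : r ≠ []) (hq : q ≠ []) :
    Compatible (r, q) ([], []) := by
  simp [Compatible, hr, hq, List.prefix_nil]

end Compatible

theorem PairwiseCompatible.map_cons_cons {c : List (List ℕ × List ℕ)}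
    (hc : PairwiseCompatible c) (i k : ℕ) :
    PairwiseCompatible (c.map fun rq => (i :: rq.1, k :: rq.2)) := by
  simp only [PairwiseCompatible, List.mem_map]
  rintro _ ⟨e, he, rfl⟩ _ ⟨e', he', rfl⟩
  exact (hc e he e' he').cons_cons i k

theorem PairwiseCompatible.map_cons_shiftHead {c : List (List ℕ × List ℕ)}
    (hc : PairwiseCompatible c) (hne : ∀ e ∈ c, e.2 ≠ []) (i k : ℕ) :
    PairwiseCompatible (c.map fun rq => (i :: rq.1, shiftHead k rq.2)) := by
  simp only [PairwiseCompatible, List.mem_map]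
  rintro _ ⟨e, he, rfl⟩ _ ⟨e', he', rfl⟩
  exact (hc e he e' he').cons_shiftHead i k (hne e he) (hne e' he')

theorem PairwiseCompatible.cons_nil_nil {c : List (List ℕ × List ℕ)}
    (hc : PairwiseCompatible c) (hne : ∀ e ∈ c, e.1 ≠ [] ∧ e.2 ≠ []) :
    PairwiseCompatible (([], []) :: c) := by
  simp only [PairwiseCompatible, List.mem_cons, forall_eq_or_imp]
  exact ⟨⟨by simp [Compatible], fun e he => .nil_nil_left (hne e he).1 (hne e he).2⟩,
    fun e he => ⟨.nil_nil_right (hne e he).1 (hne e he).2, hc e he⟩⟩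

theorem PairwiseCompatible.append {c d : List (List ℕ × List ℕ)} (hc : PairwiseCompatible c)
    (hd : PairwiseCompatible d)
    (hcd : ∀ e ∈ c, ∀ e' ∈ d, Compatible e e' ∧ Compatible e' e) :
    PairwiseCompatible (c ++ d) := by
  simp only [PairwiseCompatible, List.mem_append]
  rintro e (he | he) e' (he' | he')
  exacts [hc e he e' he', (hcd e he e' he').1, (hcd e' he' e he).2, hd e he e' he']

/- `corrT keep pref t` pairs the path of each kept edge of `t` with the path of the same edge in
`contractT keep pref t`. In `corrL keep pref i k cs`, the first tree of `cs` is child `i` and its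
contraction starts at position `k` of the contracted child list; `childCorr` lifts the
correspondence `c` inside one such child. -/
def childCorr (kept : Bool) (i k : ℕ) (c : List (List ℕ × List ℕ)) :
    List (List ℕ × List ℕ) :=
  if kept then (([], []) :: c).map fun rq => (i :: rq.1, k :: rq.2)
  else c.map fun rq => (i :: rq.1, shiftHead k rq.2)

mutual
  def corrT (keep : List ℕ → Bool) (pref : List ℕ) : RTree α → List (List ℕ × List ℕ)
    | .node cs => corrL keep pref 0 0 cs
  def corrL (keep : List ℕ → Bool) (pref : List ℕ) :
      ℕ → ℕ → List (α × RTree α) → List (List ℕ × List ℕ)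
    | _, _, [] => []
    | i, k, (a, t) :: rest =>
        childCorr (keep (pref ++ [i])) i k (corrT keep (pref ++ [i]) t) ++
          corrL keep pref (i + 1) (k + (contractL keep pref i [(a, t)]).length) rest
end

theorem contractL_cons (keep : List ℕ → Bool) (pref : List ℕ) (i : ℕ) (c : α × RTree α)
    (rest : List (α × RTree α)) :
    contractL keep pref i (c :: rest)
      = contractL keep pref i [c] ++ contractL keep pref (i + 1) rest := by
  obtain ⟨a, t⟩ := c
  simp [contractL]

theorem contractL_singleton (keep : List ℕ → Bool) (pref : List ℕ) (i : ℕ) (a : α)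
    (t : RTree α) :
    contractL keep pref i [(a, t)] =
      if keep (pref ++ [i]) then [(a, contractT keep (pref ++ [i]) t)]
      else children (contractT keep (pref ++ [i]) t) := by
  cases h : contractT keep (pref ++ [i]) t
  simp [contractL, h]

theorem corrL_cons (keep : List ℕ → Bool) (pref : List ℕ) (i k : ℕ) (a : α) (t : RTree α)
    (rest : List (α × RTree α)) :
    corrL keep pref i k ((a, t) :: rest) = corrL keep pref i k [(a, t)] ++
      corrL keep pref (i + 1) (k + (contractL keep pref i [(a, t)]).length) rest := by
  simp [corrL]

theorem corrL_singleton (keep : List ℕ → Bool) (pref : List ℕ) (i k : ℕ) (a : α)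
    (t : RTree α) :
    corrL keep pref i k [(a, t)]
      = childCorr (keep (pref ++ [i])) i k (corrT keep (pref ++ [i]) t) := by
  simp [corrL]

mutual
theorem corrT_map_fst (keep : List ℕ → Bool) (pref : List ℕ) :
    ∀ t : RTree α, (corrT keep pref t).map Prod.fst = (edgePaths t).filter (keep <| pref ++ ·)
  | .node cs => corrL_map_fst keep pref 0 0 cs

theorem corrL_map_fst (keep : List ℕ → Bool) (pref : List ℕ) :
    ∀ (i k : ℕ) (cs : List (α × RTree α)),
      (corrL keep pref i k cs).map Prod.fst = (edgePathsL i cs).filter (keep <| pref ++ ·)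
  | _, _, [] => rfl
  | i, k, (a, t) :: rest => by
    have hsub := corrT_map_fst keep (pref ++ [i]) t
    have hcomp : (keep <| pref ++ ·) ∘ List.cons i = (keep <| pref ++ [i] ++ ·) := by
      funext r; simp
    simp only [corrL, edgePathsL, childCorr, List.map_append, List.filter_append,
      corrL_map_fst keep pref (i + 1), List.cons_append, List.filter_cons, List.filter_map, hcomp]
    simp only [List.append_assoc, List.singleton_append] at hsub
    split <;> simp [← hsub, List.map_map, Function.comp_def]
end

mutual
theorem corrT_map_snd (keep : List ℕ → Bool) (pref : List ℕ) :
    ∀ t : RTree α, (corrT keep pref t).map Prod.snd = edgePaths (contractT keep pref t)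
  | .node cs => corrL_map_snd keep pref 0 0 cs

theorem corrL_map_snd (keep : List ℕ → Bool) (pref : List ℕ) :
    ∀ (i k : ℕ) (cs : List (α × RTree α)),
      (corrL keep pref i k cs).map Prod.snd = edgePathsL k (contractL keep pref i cs)
  | _, _, [] => rfl
  | i, k, (a, t) :: rest => by
    have hsub := corrT_map_snd keep (pref ++ [i]) t
    rw [corrL, contractL_cons keep pref i (a, t) rest, edgePathsL_append, List.map_append,
      corrL_map_snd keep pref (i + 1), contractL_singleton, childCorr]
    congr 1
    split
    · simp [edgePathsL, List.map_map, Function.comp_def, ← hsub]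
    · cases hC : contractT keep (pref ++ [i]) t with
      | node cs' =>
      rw [hC, edgePaths] at hsub
      have hshift := edgePathsL_add k 0 cs'
      rw [Nat.add_zero] at hshift
      simp [hshift, ← hsub, List.map_map, Function.comp_def]
end

theorem compatible_of_mem_edgePathsL_append {e e' : List ℕ × List ℕ} {i k : ℕ}
    {cs cs' ds ds' : List (α × RTree α)}
    (h₁ : e.1 ∈ edgePathsL i cs) (h₂ : e.2 ∈ edgePathsL k ds)
    (h₁' : e'.1 ∈ edgePathsL (i + cs.length) cs')
    (h₂' : e'.2 ∈ edgePathsL (k + ds.length) ds') :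
    Compatible e e' ∧ Compatible e' e := by
  obtain ⟨r, q⟩ := e
  obtain ⟨r', q'⟩ := e'
  obtain ⟨h, r, rfl, -, hh⟩ := exists_cons_of_mem_edgePathsL h₁
  obtain ⟨g, q, rfl, -, hg⟩ := exists_cons_of_mem_edgePathsL h₂
  obtain ⟨h', r', rfl, hh', -⟩ := exists_cons_of_mem_edgePathsL h₁'
  obtain ⟨g', q', rfl, hg', -⟩ := exists_cons_of_mem_edgePathsL h₂'
  exact ⟨.of_head_lt (by omega) (by omega), .of_head_gt (by omega) (by omega)⟩

theorem mem_corrL {keep : List ℕ → Bool} {pref : List ℕ} {i k : ℕ}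
    {cs : List (α × RTree α)} {e : List ℕ × List ℕ} (he : e ∈ corrL keep pref i k cs) :
    e.1 ∈ edgePathsL i cs ∧ e.2 ∈ edgePathsL k (contractL keep pref i cs) := by
  have h₁ := List.mem_map_of_mem (f := Prod.fst) he
  have h₂ := List.mem_map_of_mem (f := Prod.snd) he
  rw [corrL_map_fst] at h₁
  rw [corrL_map_snd] at h₂
  exact ⟨List.mem_of_mem_filter h₁, h₂⟩

theorem mem_corrT {keep : List ℕ → Bool} {pref : List ℕ} {t : RTree α}
    {e : List ℕ × List ℕ} (he : e ∈ corrT keep pref t) :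
    e.1 ∈ edgePaths t ∧ keep (pref ++ e.1) ∧ e.2 ∈ edgePaths (contractT keep pref t) := by
  have h₁ := List.mem_map_of_mem (f := Prod.fst) he
  have h₂ := List.mem_map_of_mem (f := Prod.snd) he
  rw [corrT_map_fst, List.mem_filter] at h₁
  rw [corrT_map_snd] at h₂
  exact ⟨h₁.1, h₁.2, h₂⟩

theorem ne_nil_of_mem_corrT {keep : List ℕ → Bool} {pref : List ℕ} {t : RTree α}
    {e : List ℕ × List ℕ} (he : e ∈ corrT keep pref t) : e.1 ≠ [] ∧ e.2 ≠ [] := by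
  obtain ⟨h₁, -, h₂⟩ := mem_corrT he
  obtain ⟨_, _, hr, -⟩ := exists_cons_of_mem_edgePaths h₁
  obtain ⟨_, _, hq, -⟩ := exists_cons_of_mem_edgePaths h₂
  simp [hr, hq]

mutual
theorem pairwiseCompatible_corrT (keep : List ℕ → Bool) (pref : List ℕ) :
    ∀ t : RTree α, PairwiseCompatible (corrT keep pref t)
  | .node cs => pairwiseCompatible_corrL keep pref 0 0 cs

theorem pairwiseCompatible_corrL (keep : List ℕ → Bool) (pref : List ℕ) :
    ∀ (i k : ℕ) (cs : List (α × RTree α)), PairwiseCompatible (corrL keep pref i k cs)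
  | _, _, [] => by simp [PairwiseCompatible, corrL]
  | i, k, (a, t) :: rest => by
    rw [corrL_cons]
    refine .append ?_ (pairwiseCompatible_corrL keep pref _ _ rest) fun e he e' he' => ?_
    · have hsub := pairwiseCompatible_corrT keep (pref ++ [i]) t
      rw [corrL_singleton, childCorr]
      split
      · exact (hsub.cons_nil_nil fun e he => ne_nil_of_mem_corrT he).map_cons_cons i k
      · exact hsub.map_cons_shiftHead (fun e he => (ne_nil_of_mem_corrT he).2) i k
    · obtain ⟨h₁, h₂⟩ := mem_corrL he
      obtain ⟨h₁', h₂'⟩ := mem_corrL he'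
      exact compatible_of_mem_edgePathsL_append h₁ h₂ h₁' h₂'
end

theorem labelAt_node_append_append (pre cs post : List (α × RTree α)) {k h : ℕ} (r : List ℕ)
    (hk : pre.length + h = k) (hh : h < cs.length) :
    labelAt (node (pre ++ cs ++ post)) (k :: r) = labelAt (node cs) (h :: r) := by
  subst hk
  simp only [labelAt, List.append_assoc, List.getElem?_append_right (Nat.le_add_right _ _),
    Nat.add_sub_cancel_left, List.getElem?_append_left hh]

theorem labelAt_node_cons_zero (a : α) (t : RTree α) (cs : List (α × RTree α)) {r : List ℕ}
    (hr : r ≠ []) : labelAt (node ((a, t) :: cs)) (0 :: r) = labelAt t r := by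
  obtain ⟨h, r, rfl⟩ := List.exists_cons_of_ne_nil hr
  rfl

theorem labelAt_node_children (t : RTree α) (p : List ℕ) :
    labelAt (node (children t)) p = labelAt t p := by
  cases t; rfl

theorem labelAt_of_mem_corrL_singleton {keep : List ℕ → Bool} {pref : List ℕ} {a : α}
    {t : RTree α} {pre pre' post post' : List (α × RTree α)}
    (hsub : ∀ e ∈ corrT keep (pref ++ [pre.length]) t,
      labelAt t e.1 = labelAt (contractT keep (pref ++ [pre.length]) t) e.2)
    {e : List ℕ × List ℕ} (he : e ∈ corrL keep pref pre.length pre'.length [(a, t)]) :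
    labelAt (node (pre ++ [(a, t)] ++ post)) e.1
      = labelAt (node (pre' ++ contractL keep pref pre.length [(a, t)] ++ post')) e.2 := by
  rw [corrL_singleton, childCorr] at he
  rw [contractL_singleton]
  split at he
  · rename_i hkeep
    simp only [List.map_cons, List.mem_cons, List.mem_map] at he
    rw [if_pos hkeep]
    rcases he with rfl | ⟨⟨r, q⟩, hrq, rfl⟩ <;>
      rw [labelAt_node_append_append _ _ _ _ (Nat.add_zero _) (by simp),
        labelAt_node_append_append _ _ _ _ (Nat.add_zero _) (by simp)]
    · rfl
    · rw [labelAt_node_cons_zero _ _ _ (ne_nil_of_mem_corrT hrq).1,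
        labelAt_node_cons_zero _ _ _ (ne_nil_of_mem_corrT hrq).2]
      exact hsub _ hrq
  · rename_i hkeep
    obtain ⟨⟨r, q⟩, hrq, rfl⟩ := List.mem_map.mp he
    obtain ⟨g, q, rfl, hg⟩ := exists_cons_of_mem_edgePaths (mem_corrT hrq).2.2
    rw [if_neg hkeep, labelAt_node_append_append _ _ _ _ (Nat.add_zero _) (by simp),
      labelAt_node_cons_zero _ _ _ (ne_nil_of_mem_corrT hrq).1, hsub _ hrq, shiftHead,
      labelAt_node_append_append _ _ _ _ rfl hg, labelAt_node_children]

mutual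
theorem labelAt_of_mem_corrT (keep : List ℕ → Bool) (pref : List ℕ) :
    ∀ t : RTree α, ∀ e ∈ corrT keep pref t,
      labelAt t e.1 = labelAt (contractT keep pref t) e.2
  | .node cs, e, he => labelAt_of_mem_corrL keep pref 0 0 cs e he [] [] rfl rfl

-- `pre` and `pre'` stand for the preceding siblings, so that paths keep their absolute indices.
theorem labelAt_of_mem_corrL (keep : List ℕ → Bool) (pref : List ℕ) :
    ∀ (i k : ℕ) (cs : List (α × RTree α)), ∀ e ∈ corrL keep pref i k cs,
      ∀ pre pre' : List (α × RTree α), pre.length = i → pre'.length = k →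
        labelAt (node (pre ++ cs)) e.1 = labelAt (node (pre' ++ contractL keep pref i cs)) e.2
  | _, _, [], e, he, _, _, _, _ => by simp [corrL] at he
  | i, k, (a, t) :: rest, e, he, pre, pre', hpre, hpre' => by
    rw [corrL_cons, List.mem_append] at he
    rw [contractL_cons, ← List.singleton_append, ← List.append_assoc, ← List.append_assoc]
    rcases he with he | he
    · subst hpre hpre'
      exact labelAt_of_mem_corrL_singleton (labelAt_of_mem_corrT keep _ t) he
    · simpa using labelAt_of_mem_corrL keep pref (i + 1) _ rest e he (pre ++ [(a, t)])
        (pre' ++ contractL keep pref i [(a, t)]) (by simp [hpre]) (by simp [hpre'])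
end

theorem exists_mem_corrT_fst {keep : List ℕ → Bool} {pref r : List ℕ} {t : RTree α}
    (hr : r ∈ edgePaths t) (hkeep : keep (pref ++ r)) : ∃ q, (r, q) ∈ corrT keep pref t := by
  have : r ∈ (corrT keep pref t).map Prod.fst := by
    rw [corrT_map_fst]
    exact List.mem_filter.mpr ⟨hr, hkeep⟩
  obtain ⟨⟨_, q⟩, he, rfl⟩ := List.mem_map.mp this
  exact ⟨q, he⟩

theorem exists_mem_corrT_snd {keep : List ℕ → Bool} {pref q : List ℕ} {t : RTree α}
    (hq : q ∈ edgePaths (contractT keep pref t)) : ∃ r, (r, q) ∈ corrT keep pref t := by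
  rw [← corrT_map_snd] at hq
  obtain ⟨⟨r, _⟩, he, rfl⟩ := List.mem_map.mp hq
  exact ⟨r, he⟩

theorem isMatching_empty (t₁ t₂ : RTree α) : IsMatching t₁ t₂ ∅ := by
  simp [IsMatching]

theorem IsMatching.filter {t₁ t₂ : RTree α} {M : Finset (List ℕ × List ℕ)}
    (hM : IsMatching t₁ t₂ M) (p : List ℕ × List ℕ → Prop) [DecidablePred p] :
    IsMatching t₁ t₂ (M.filter p) := by
  simp only [IsMatching, Finset.mem_filter]
  exact ⟨fun pq h => hM.1 pq h.1, fun pq h pq' h' => hM.2 pq h.1 pq' h'.1⟩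

theorem card_filter_le_one_of_mem_corr {t₁ t₂ : RTree α} {M : Finset (List ℕ × List ℕ)}
    (hM : IsMatching t₁ t₂ M) {c : List (List ℕ × List ℕ)} (hc : PairwiseCompatible c)
    {src : List ℕ → List ℕ} (hsrc : ∀ pq ∈ M, (src pq.2, pq.2) ∈ c) (x : List ℕ) :
    (M.filter (src ·.2 = x)).card ≤ 1 := by
  refine Finset.card_le_one.mpr fun pq hpq pq' hpq' => ?_
  rw [Finset.mem_filter] at hpq hpq'
  have h₁ := hsrc pq hpq.1
  have h₂ := hsrc pq' hpq'.1
  rw [hpq.2] at h₁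
  rw [hpq'.2] at h₂
  have hq : pq.2 = pq'.2 := (hc _ h₁ _ h₂).1.mp rfl
  exact Prod.ext ((hM.2 pq hpq.1 pq' hpq'.1).1.mpr hq) hq

section Similarity
variable [DecidableEq α]

theorem weight_le_two_mul_card (t₁ t₂ : RTree α) (M : Finset (List ℕ × List ℕ)) :
    weight t₁ t₂ M ≤ 2 * M.card := by
  rw [weight, mul_comm, ← smul_eq_mul, ← Finset.sum_const]
  exact Finset.sum_le_sum fun _ _ => by split <;> omega

theorem bddAbove_weights (t₁ t₂ : RTree α) :
    BddAbove {w | ∃ M, IsMatching t₁ t₂ M ∧ w = weight t₁ t₂ M} := by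
  refine ⟨2 * (t₁.edgePaths.toFinset ×ˢ t₂.edgePaths.toFinset).card, ?_⟩
  rintro _ ⟨M, hM, rfl⟩
  have hsub : M ⊆ t₁.edgePaths.toFinset ×ˢ t₂.edgePaths.toFinset := fun pq hpq => by
    simpa using hM.1 pq hpq
  exact (weight_le_two_mul_card t₁ t₂ M).trans (by gcongr)

theorem weight_le_simi {t₁ t₂ : RTree α} {M : Finset (List ℕ × List ℕ)}
    (hM : IsMatching t₁ t₂ M) : weight t₁ t₂ M ≤ simi t₁ t₂ :=
  le_csSup (bddAbove_weights t₁ t₂) ⟨M, hM, rfl⟩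

theorem simi_le_of_forall {t₁ t₂ : RTree α} {c : ℕ}
    (h : ∀ M, IsMatching t₁ t₂ M → weight t₁ t₂ M ≤ c) : simi t₁ t₂ ≤ c :=
  csSup_le ⟨_, ∅, isMatching_empty t₁ t₂, rfl⟩ fun _ ⟨M, hM, hw⟩ => hw ▸ h M hM

theorem weight_le_simi_of_transfer {T S S' : RTree α} {M : Finset (List ℕ × List ℕ)}
    (hM : IsMatching T S M) (g : List ℕ → List ℕ)
    (hmem : ∀ pq ∈ M, g pq.2 ∈ edgePaths S')
    (hlabel : ∀ pq ∈ M, labelAt S' (g pq.2) = labelAt S pq.2)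
    (hcomp : ∀ pq ∈ M, ∀ pq' ∈ M, Compatible (pq.2, g pq.2) (pq'.2, g pq'.2)) :
    weight T S M ≤ simi T S' := by
  have hinj : Set.InjOn (fun pq : List ℕ × List ℕ => (pq.1, g pq.2)) M := by
    intro pq hpq pq' hpq' heq
    simp only [Prod.mk.injEq] at heq
    exact Prod.ext heq.1 ((hcomp pq hpq pq' hpq').1.mpr heq.2)
  have hM' : IsMatching T S' (M.image fun pq => (pq.1, g pq.2)) := by
    refine ⟨?_, ?_⟩ <;> simp only [Finset.forall_mem_image]
    · exact fun pq hpq => ⟨(hM.1 pq hpq).1, hmem pq hpq⟩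
    · exact fun pq hpq pq' hpq' => Compatible.trans (hM.2 pq hpq pq' hpq') (hcomp pq hpq pq' hpq')
  calc weight T S M = weight T S' (M.image fun pq => (pq.1, g pq.2)) := by
        rw [weight, weight, Finset.sum_image hinj]
        exact Finset.sum_congr rfl fun pq hpq => by rw [hlabel pq hpq]
    _ ≤ simi T S' := weight_le_simi hM'

theorem simi_contractT_le (T Q : RTree α) {keep keep' : List ℕ → Bool} (x : List ℕ)
    (hx : ∀ p, p ≠ x → keep' p = keep p) :
    simi T (contractT keep' [] Q) ≤ simi T (contractT keep [] Q) + 2 := by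
  refine simi_le_of_forall fun M hM => ?_
  set c := corrT keep [] Q
  set c' := corrT keep' [] Q
  let src : List ℕ → List ℕ := fun q => Classical.epsilon fun r => (r, q) ∈ c'
  let dst : List ℕ → List ℕ := fun r => Classical.epsilon fun q => (r, q) ∈ c
  set Mx := M.filter (src ·.2 = x)
  set Mrest := M.filter (src ·.2 ≠ x)
  have hsrc : ∀ pq ∈ M, (src pq.2, pq.2) ∈ c' := fun pq hpq =>
    Classical.epsilon_spec (exists_mem_corrT_snd (hM.1 pq hpq).2)
  have hsrc' : ∀ pq ∈ Mrest, (src pq.2, pq.2) ∈ c' := fun pq hpq =>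
    hsrc pq (Finset.mem_of_mem_filter pq hpq)
  have hdst : ∀ pq ∈ Mrest, (src pq.2, dst (src pq.2)) ∈ c := by
    intro pq hpq
    obtain ⟨hr, hkeep', -⟩ := mem_corrT (hsrc' pq hpq)
    rw [List.nil_append, hx _ (Finset.mem_filter.mp hpq).2] at hkeep'
    exact Classical.epsilon_spec (exists_mem_corrT_fst hr (by rwa [List.nil_append]))
  have hrest : weight T (contractT keep' [] Q) Mrest ≤ simi T (contractT keep [] Q) := by
    refine weight_le_simi_of_transfer (hM.filter _) (dst ∘ src)
      (fun pq hpq => (mem_corrT (hdst pq hpq)).2.2) (fun pq hpq => ?_)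
      (fun pq hpq pq' hpq' => ?_)
    · rw [Function.comp_apply, ← labelAt_of_mem_corrT keep [] Q _ (hdst pq hpq),
        labelAt_of_mem_corrT keep' [] Q _ (hsrc' pq hpq)]
    · exact (pairwiseCompatible_corrT keep' [] Q _ (hsrc' pq hpq) _ (hsrc' pq' hpq')).swap.trans
        (pairwiseCompatible_corrT keep [] Q _ (hdst pq hpq) _ (hdst pq' hpq'))
  have hMx : Mx.card ≤ 1 :=
    card_filter_le_one_of_mem_corr hM (pairwiseCompatible_corrT keep' [] Q) hsrc x
  calc weight T (contractT keep' [] Q) M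
      = weight T (contractT keep' [] Q) Mx + weight T (contractT keep' [] Q) Mrest :=
        (Finset.sum_filter_add_sum_filter_not M _ _).symm
    _ ≤ 2 + simi T (contractT keep [] Q) :=
        add_le_add ((weight_le_two_mul_card _ _ _).trans (by omega)) hrest
    _ = simi T (contractT keep [] Q) + 2 := add_comm _ _

end Similarity

theorem window_succ_right (Q : RTree α) {i j : ℕ} (hij : i ≤ j) :
    window Q i (j + 1) = window Q i j ++ (dblTour Q)[j]?.toList := by
  rw [window, window, Nat.sub_add_comm hij, List.take_add_one, List.getElem?_drop,
    Nat.add_sub_cancel' hij]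

theorem window_pred_left (Q : RTree α) {i j : ℕ} (hi : 1 ≤ i) (hij : i ≤ j) :
    window Q (i - 1) j = (dblTour Q)[i - 1]?.toList ++ window Q i j := by
  rw [window, window, List.drop_eq_getElem?_toList_append, Nat.sub_add_cancel hi,
    show j - (i - 1) = j - i + 1 by omega]
  cases h : (dblTour Q)[i - 1]? with
  | none =>
    rw [List.getElem?_eq_none_iff] at h
    simp [List.drop_eq_nil_of_le (show (dblTour Q).length ≤ i by omega)]
  | some y => simp

theorem simi_segment_le [DecidableEq α] (T Q : RTree α) {i j i' j' : ℕ} (o : Option (List ℕ))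
    (h : (window Q i' j').Perm (window Q i j ++ o.toList)) :
    simi T (segment Q i' j') ≤ simi T (segment Q i j) + 2 := by
  refine simi_contractT_le T Q (o.getD []) fun p hp => ?_
  rw [h.count_eq, List.count_append]
  cases o with
  | none => simp
  | some y => simp [Ne.symm (show p ≠ y from hp)]

end RTree

/-- extending a segment of the (doubled Euler tour of the) unrooted tree `Q`
by one position increases the similarity with a fixed rooted tree `T` by at most 2
(indices are 0-based). -/
theorem stmt4 {α : Type} [DecidableEq α] (T Q : RTree α) (i j : ℕ)
    (hij : i ≤ j) (hlen : j - i + 1 ≤ 2 * Q.numEdges) :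
    RTree.simi T (Q.segment i (j + 1)) ≤ RTree.simi T (Q.segment i j) + 2 ∧
    (1 ≤ i → RTree.simi T (Q.segment (i - 1) j) ≤ RTree.simi T (Q.segment i j) + 2) :=
  ⟨RTree.simi_segment_le T Q _ (by rw [RTree.window_succ_right Q hij]),
    fun hi => RTree.simi_segment_le T Q _
      (by rw [RTree.window_pred_left Q hi hij]; exact List.perm_append_comm)⟩
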